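/- Let G be a weighted directed graph. For all vertices s,t and all h ∈ ℕ, the hop distances satisfy the recurrence d^{h+1}(s,t) = min( d^h(s,t), min over negative edges (u,v) ∈ E of ( d^h(s,u) + ℓ(u,v) + d^0(v,t) ) ), with all quantities in ℝ ∪ {+∞} (hop distances are never −∞, since every h-hop walk has length at least h times the most negative edge length). -/

import Mathlib

/-- A weighted directed graph: a finite vertex type `V`, an edge relation, and
real-valued edge lengths. -/
structure WDigraph (V : Type*) where
  Edge : V → V → Prop
  len : V → V → ℝ

namespace WDigraph

variable {V : Type*}

/-- `p` is a walk from `s` to `t`: a nonempty list of vertices starting at `s`,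
ending at `t`, whose consecutive pairs are edges.  The one-vertex list `[s]` is
the empty walk from `s` to `s`. -/
def IsWalk (G : WDigraph V) (s t : V) (p : List V) : Prop :=
  p ≠ [] ∧ p.head? = some s ∧ p.getLast? = some t ∧ p.Chain' G.Edge

/-- The length of a walk: the sum of the lengths of its edges, counted with
multiplicity (the empty walk has length 0). -/
noncomputable def walkLen (G : WDigraph V) (p : List V) : ℝ :=
  ((p.zip p.tail).map fun q => G.len q.1 q.2).sum

/-- The number of hops of a walk: its traversals of negative edges, counted
with multiplicity. -/
noncomputable def hops (G : WDigraph V) (p : List V) : ℕ :=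
  ((p.zip p.tail).filter fun q => decide (G.len q.1 q.2 < 0)).length

/-- The distance `d(s,t)`: the infimum in `ℝ ∪ {±∞}` of the lengths of all
walks from `s` to `t` (equal to `+∞` when no walk exists). -/
noncomputable def dist (G : WDigraph V) (s t : V) : EReal :=
  sInf {x : EReal | ∃ p, G.IsWalk s t p ∧ x = (G.walkLen p : EReal)}

/-- The `h`-hop distance `d^h(s,t)`: the infimum in `ℝ ∪ {±∞}` of the lengths
of walks from `s` to `t` with at most `h` hops. -/
noncomputable def hopDist (G : WDigraph V) (h : ℕ) (s t : V) : EReal :=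
  sInf {x : EReal | ∃ p, G.IsWalk s t p ∧ G.hops p ≤ h ∧ x = (G.walkLen p : EReal)}

/-- A negative cycle: a walk of negative length from a vertex to itself. -/
def HasNegCycle (G : WDigraph V) : Prop :=
  ∃ v p, G.IsWalk v v p ∧ G.walkLen p < 0

/-- Reweighting the graph by a potential `φ`:
`ℓ_φ(u,v) = φ(u) + ℓ(u,v) − φ(v)`. -/
noncomputable def reweight (G : WDigraph V) (φ : V → ℝ) : WDigraph V :=
  ⟨G.Edge, fun u v => φ u + G.len u v - φ v⟩

/-- A potential `φ` is valid if `ℓ_φ(e) ≥ 0` for every edge `e` with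
`ℓ(e) ≥ 0`. -/
def Valid (G : WDigraph V) (φ : V → ℝ) : Prop :=
  ∀ u v, G.Edge u v → 0 ≤ G.len u v → 0 ≤ φ u + G.len u v - φ v

end WDigraph


namespace WDigraph

variable {V : Type*}
variable (G : WDigraph V)

lemma walkLen_single (a : V) : G.walkLen [a] = 0 := by simp [walkLen]

lemma hops_single (a : V) : G.hops [a] = 0 := by simp [hops]

lemma walkLen_cons_cons (a b : V) (l : List V) :
    G.walkLen (a :: b :: l) = G.len a b + G.walkLen (b :: l) := by
  simp [walkLen]

lemma hops_cons_cons (a b : V) (l : List V) :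
    G.hops (a :: b :: l) = (if G.len a b < 0 then 1 else 0) + G.hops (b :: l) := by
  by_cases hab : G.len a b < 0 <;> simp [hops, hab, List.filter_cons, Nat.add_comm]

lemma isWalk_single {s t a : V} : G.IsWalk s t [a] ↔ a = s ∧ a = t := by
  simp [IsWalk, eq_comm, List.Chain', List.isChain_singleton]

lemma isWalk_cons_cons {s t : V} {a b : V} {l : List V} :
    G.IsWalk s t (a :: b :: l) ↔ a = s ∧ G.Edge a b ∧ G.IsWalk b t (b :: l) := by
  simp only [IsWalk, List.getLast?_cons_cons, List.Chain', List.isChain_cons_cons, List.head?_cons,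
    Option.some.injEq, ne_eq, List.cons_ne_nil, not_false_eq_true, true_and]
  tauto

lemma isWalk_append {u v t : V} (e : G.Edge u v) :
    ∀ (p : List V) (s : V) (q : List V), G.IsWalk s u p → G.IsWalk v t q →
      G.IsWalk s t (p ++ q) ∧
      G.walkLen (p ++ q) = G.walkLen p + G.len u v + G.walkLen q ∧
      G.hops (p ++ q) = G.hops p + (if G.len u v < 0 then 1 else 0) + G.hops q
  | [], s, q, hp, hq => by simp [IsWalk] at hp
  | [a], s, q, hp, hq => by
    rw [isWalk_single] at hp
    obtain ⟨rfl, rfl⟩ := hp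
    obtain ⟨q', rfl⟩ : ∃ q', q = v :: q' := by
      obtain ⟨hne, hh, -, -⟩ := hq
      obtain ⟨c, q', rfl⟩ := List.exists_cons_of_ne_nil hne
      simp at hh; exact ⟨q', by rw [hh]⟩
    refine ⟨?_, ?_, ?_⟩
    · rw [List.singleton_append, isWalk_cons_cons]; exact ⟨rfl, e, hq⟩
    · rw [List.singleton_append, walkLen_cons_cons, walkLen_single]; ring
    · rw [List.singleton_append, hops_cons_cons, hops_single]; omega
  | a :: b :: l, s, q, hp, hq => by
    rw [isWalk_cons_cons] at hp
    obtain ⟨rfl, hab, hp⟩ := hp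
    obtain ⟨h1, h2, h3⟩ := isWalk_append e (b :: l) b q hp hq
    simp only [List.cons_append] at h1 h2 h3 ⊢
    refine ⟨?_, ?_, ?_⟩
    · rw [isWalk_cons_cons]; exact ⟨rfl, hab, h1⟩
    · rw [walkLen_cons_cons, walkLen_cons_cons G a b l, h2]; ring
    · rw [hops_cons_cons, hops_cons_cons G a b l, h3]; omega

lemma decomp :
    ∀ (p : List V) (s t : V), G.IsWalk s t p → 0 < G.hops p →
      ∃ u v q r, G.Edge u v ∧ G.len u v < 0 ∧ G.IsWalk s u q ∧ G.IsWalk v t r ∧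
        G.hops r = 0 ∧ G.hops p = G.hops q + 1 ∧
        G.walkLen p = G.walkLen q + G.len u v + G.walkLen r
  | [], s, t, hp, _ => by simp [IsWalk] at hp
  | [a], s, t, hp, hh => by rw [hops_single] at hh; omega
  | a :: b :: l, s, t, hp, hh => by
    rw [isWalk_cons_cons] at hp
    obtain ⟨rfl, hab, hp⟩ := hp
    by_cases htl : 0 < G.hops (b :: l)
    · obtain ⟨u, v, q, r, e, hneg, hq, hr, hr0, hhops, hlen⟩ := decomp (b :: l) b t hp htl
      obtain ⟨q', rfl⟩ : ∃ q', q = b :: q' := by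
        obtain ⟨hne, hhd, -, -⟩ := hq
        obtain ⟨c, q', rfl⟩ := List.exists_cons_of_ne_nil hne
        simp at hhd; exact ⟨q', by rw [hhd]⟩
      refine ⟨u, v, a :: b :: q', r, e, hneg, ?_, hr, hr0, ?_, ?_⟩
      · rw [isWalk_cons_cons]; exact ⟨rfl, hab, hq⟩
      · rw [hops_cons_cons, hops_cons_cons G a b q', hhops]; omega
      · rw [walkLen_cons_cons, walkLen_cons_cons G a b q', hlen]; ring
    · have hr0 : G.hops (b :: l) = 0 := by omega
      have hneg : G.len a b < 0 := by
        rw [hops_cons_cons, hr0] at hh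
        by_contra hc; simp [hc] at hh
      refine ⟨a, b, [a], b :: l, hab, hneg, ?_, hp, hr0, ?_, ?_⟩
      · rw [isWalk_single]; exact ⟨rfl, rfl⟩
      · rw [hops_cons_cons, hops_single, hr0, if_pos hneg]
      · rw [walkLen_cons_cons, walkLen_single]; ring

lemma walkLen_lb (M : ℝ) (hM : 0 ≤ M) (hb : ∀ u v : V, -M ≤ G.len u v) :
    ∀ p : List V, -((G.hops p : ℝ) * M) ≤ G.walkLen p
  | [] => by simp [walkLen, hops]
  | [a] => by rw [hops_single, walkLen_single]; simp
  | a :: b :: l => by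
    have IH := walkLen_lb M hM hb (b :: l)
    rw [hops_cons_cons, walkLen_cons_cons]
    by_cases hab : G.len a b < 0
    · rw [if_pos hab]; push_cast
      have := hb a b; nlinarith
    · rw [if_neg hab]; push_cast
      push_neg at hab; nlinarith

lemma hopDist_lb (M : ℝ) (hM : 0 ≤ M) (hb : ∀ u v : V, -M ≤ G.len u v)
    (h' : ℕ) (s t : V) : ((-(h' * M) : ℝ) : EReal) ≤ G.hopDist h' s t := by
  refine le_sInf fun x hx => ?_
  obtain ⟨p, hp, hh, rfl⟩ := hx
  rw [EReal.coe_le_coe_iff]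
  have h1 := G.walkLen_lb M hM hb p
  have h2 : (G.hops p : ℝ) * M ≤ (h' : ℝ) * M := by
    apply mul_le_mul_of_nonneg_right _ hM
    exact_mod_cast hh
  linarith


end WDigraph

/-- Hop distances are never `−∞`, and satisfy the recurrence
`d^{h+1}(s,t) = min(d^h(s,t), min over negative edges (u,v) of
(d^h(s,u) + ℓ(u,v) + d^0(v,t)))` in `ℝ ∪ {+∞}`. -/
theorem hopDist_recurrence {V : Type*} [Fintype V] (G : WDigraph V) (s t : V) (h : ℕ) :
    (∀ h' : ℕ, G.hopDist h' s t ≠ ⊥) ∧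
    G.hopDist (h + 1) s t =
      min (G.hopDist h s t)
        (⨅ u : V, ⨅ v : V, ⨅ _ : G.Edge u v ∧ G.len u v < 0,
          G.hopDist h s u + (G.len u v : EReal) + G.hopDist 0 v t) := by
  classical
  obtain ⟨M₀, hM₀⟩ := Finite.exists_le (fun uv : V × V => -G.len uv.1 uv.2)
  set M : ℝ := max M₀ 0 with hMdef
  have hM : 0 ≤ M := le_max_right _ _
  have hb : ∀ u v : V, -M ≤ G.len u v := fun u v => by
    have := hM₀ (u, v); simp only at this
    have : -G.len u v ≤ M := this.trans (le_max_left _ _)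
    linarith
  have nb : ∀ (h' : ℕ) (a b : V), G.hopDist h' a b ≠ ⊥ := by
    intro h' a b hbot
    have hlb := G.hopDist_lb M hM hb h' a b
    rw [hbot, le_bot_iff] at hlb
    exact EReal.coe_ne_bot _ hlb
  refine ⟨fun h' => nb h' s t, le_antisymm (le_min ?_ ?_) ?_⟩
  · -- hopDist (h+1) ≤ hopDist h
    apply sInf_le_sInf
    rintro x ⟨p, hp, hh, rfl⟩
    exact ⟨p, hp, hh.trans (Nat.le_succ h), rfl⟩
  · -- hopDist (h+1) ≤ inner inf
    refine le_iInf fun u => le_iInf fun v => le_iInf fun huv => ?_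
    obtain ⟨e, hneg⟩ := huv
    by_cases hSu : G.hopDist h s u = ⊤
    · rw [hSu, EReal.top_add_coe, EReal.top_add_of_ne_bot (nb 0 v t)]
      exact le_top
    by_cases hSv : G.hopDist 0 v t = ⊤
    · rw [hSv, EReal.add_top_of_ne_bot]
      · exact le_top
      · rw [Ne, EReal.add_eq_bot_iff]
        push_neg
        exact ⟨nb h s u, EReal.coe_ne_bot _⟩
    set du := (G.hopDist h s u).toReal with hdu
    set dv := (G.hopDist 0 v t).toReal with hdv
    have hdu' : ((du : ℝ) : EReal) = G.hopDist h s u := EReal.coe_toReal hSu (nb h s u)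
    have hdv' : ((dv : ℝ) : EReal) = G.hopDist 0 v t := EReal.coe_toReal hSv (nb 0 v t)
    have key : ∀ ε : ℝ, 0 < ε →
        G.hopDist (h + 1) s t ≤ ((du + G.len u v + dv + ε + ε : ℝ) : EReal) := by
      intro ε hε
      have h1 : G.hopDist h s u < ((du + ε : ℝ) : EReal) := by
        rw [← hdu', EReal.coe_lt_coe_iff]; linarith
      have h2 : G.hopDist 0 v t < ((dv + ε : ℝ) : EReal) := by
        rw [← hdv', EReal.coe_lt_coe_iff]; linarith
      rw [WDigraph.hopDist, sInf_lt_iff] at h1 h2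
      obtain ⟨x, ⟨p, hp, hhp, rfl⟩, hlt1⟩ := h1
      obtain ⟨y, ⟨q, hq, hhq, rfl⟩, hlt2⟩ := h2
      obtain ⟨hw, hwl, hwh⟩ := G.isWalk_append e p s q hp hq
      have hhops : G.hops (p ++ q) ≤ h + 1 := by
        rw [hwh, if_pos hneg]; omega
      have hle : G.hopDist (h + 1) s t ≤ ((G.walkLen (p ++ q) : ℝ) : EReal) :=
        sInf_le ⟨p ++ q, hw, hhops, rfl⟩
      refine hle.trans ?_
      rw [EReal.coe_le_coe_iff, hwl]
      rw [EReal.coe_lt_coe_iff] at hlt1 hlt2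
      linarith
    have hne_top : G.hopDist (h + 1) s t ≠ ⊤ := by
      intro htop
      have := key 1 one_pos
      rw [htop, top_le_iff] at this
      exact EReal.coe_ne_top _ this
    rw [← hdu', ← hdv', ← EReal.coe_toReal hne_top (nb (h + 1) s t)]
    have : ((du : ℝ) : EReal) + (G.len u v : EReal) + ((dv : ℝ) : EReal)
        = ((du + G.len u v + dv : ℝ) : EReal) := by norm_cast
    rw [this, EReal.coe_le_coe_iff]
    apply le_of_forall_pos_le_add
    intro ε hε
    have := key (ε / 2) (by linarith)
    rw [← EReal.coe_toReal hne_top (nb (h + 1) s t), EReal.coe_le_coe_iff] at this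
    linarith
  · -- min ≤ hopDist (h+1)
    refine le_sInf ?_
    rintro x ⟨p, hp, hh, rfl⟩
    by_cases hcase : G.hops p ≤ h
    · exact min_le_of_left_le (sInf_le ⟨p, hp, hcase, rfl⟩)
    · have hpos : 0 < G.hops p := by omega
      obtain ⟨u, v, q, r, e, hneg, hq, hr, hr0, hhops, hlen⟩ := G.decomp p s t hp hpos
      refine min_le_of_right_le ?_
      refine le_trans (iInf_le _ u) (le_trans (iInf_le _ v)
        (le_trans (iInf_le _ ⟨e, hneg⟩) ?_))
      have h1 : G.hopDist h s u ≤ ((G.walkLen q : ℝ) : EReal) :=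
        sInf_le ⟨q, hq, by omega, rfl⟩
      have h2 : G.hopDist 0 v t ≤ ((G.walkLen r : ℝ) : EReal) :=
        sInf_le ⟨r, hr, le_of_eq hr0, rfl⟩
      calc G.hopDist h s u + (G.len u v : EReal) + G.hopDist 0 v t
          ≤ ((G.walkLen q : ℝ) : EReal) + (G.len u v : EReal) + ((G.walkLen r : ℝ) : EReal) :=
            add_le_add (add_le_add h1 le_rfl) h2
        _ = ((G.walkLen p : ℝ) : EReal) := by rw [hlen]; norm_cast
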